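/- arXiv:math/0312135 — 2 statements merged into one kernel-verified Lean document; each statement's English description precedes it below -/
import Mathlib

section
/- Let (A_α)_{α<ω₁} be a continuous nested transfinite sequence of separable C*-algebras with union A, and let f be a pure state on A. Then {α < ω₁ : f|_{A_α} is a pure state on A_α} is a closed unbounded subset of ω₁. -/
open scoped ComplexOrder
open Filter Topology

section
variable {A : Type*} [NonUnitalNormedRing A] [StarRing A] [CStarRing A]
  [NormedSpace ℂ A] [IsScalarTower ℂ A A] [SMulCommClass ℂ A A] [StarModule ℂ A]
  [CompleteSpace A]

/-- A state on a (possibly nonunital) C*-algebra: a positive linear functional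
of norm one. -/
def IsState {C : Type*} [NonUnitalNormedRing C] [StarRing C] [Module ℂ C]
    (f : C → ℂ) : Prop :=
  IsLinearMap ℂ f ∧ (∀ x, 0 ≤ f (star x * x)) ∧
    (∀ x, ‖f x‖ ≤ ‖x‖) ∧ ∀ ε : ℝ, 0 < ε → ∃ x, ‖x‖ ≤ 1 ∧ 1 - ε < ‖f x‖

/-- A pure state: an extreme point of the state space. -/
def IsPureState {C : Type*} [NonUnitalNormedRing C] [StarRing C] [Module ℂ C]
    (f : C → ℂ) : Prop :=
  IsState f ∧ ∀ g h : C → ℂ, IsState g → IsState h →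
    (∀ x, f x = (g x + h x) / 2) → g = h

/- Statement 12 (Lemma 4): let `(A_α)_{α<ω₁}` be a continuous nested transfinite
sequence of separable C*-subalgebras with union the whole C*-algebra `A`, and
let `f` be a pure state on `A`.  Then `{α < ω₁ : f|_{A_α} is a pure state}` is a
closed unbounded subset of `ω₁`. -/
lemma aux_w1_isLimit : Order.IsSuccLimit (Cardinal.aleph 1).ord :=
  Cardinal.isSuccLimit_ord (by simp [Cardinal.aleph0_le_aleph])

lemma aux_half {a b c : ℂ} (hav : a = (b + c) / 2) {ε : ℝ} (hc : ‖c‖ ≤ 1)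
    (ha : 1 - ε / 2 < ‖a‖) : 1 - ε < ‖b‖ := by
  have hb : b = 2 * a - c := by rw [hav]; ring
  have h2 : ‖(2:ℂ) * a‖ = 2 * ‖a‖ := by rw [norm_mul]; norm_num
  have := norm_sub_norm_le (2 * a) c
  rw [hb]
  nlinarith [norm_nonneg b, norm_nonneg a]

lemma aux_key (𝒜 : Ordinal → NonUnitalStarSubalgebra ℂ A)
    (hmono : ∀ β α, β ≤ α → α < (Cardinal.aleph 1).ord → 𝒜 β ≤ 𝒜 α)
    (hunion : (⋃ α < (Cardinal.aleph 1).ord, (𝒜 α : Set A)) = Set.univ)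
    (f : A → ℂ) (hf : IsPureState f) (x : A) (ε : ℝ) (hε : 0 < ε) :
    ∃ γ₀, γ₀ < (Cardinal.aleph 1).ord ∧ x ∈ 𝒜 γ₀ ∧
      ∀ α, γ₀ ≤ α → α < (Cardinal.aleph 1).ord →
      ∀ (hx : x ∈ 𝒜 α) (g h : 𝒜 α → ℂ), IsState g → IsState h →
      (∀ z : 𝒜 α, f (z : A) = (g z + h z) / 2) → ‖g ⟨x, hx⟩ - h ⟨x, hx⟩‖ ≤ ε := by
  have hmem : ∀ y : A, ∃ γ, γ < (Cardinal.aleph 1).ord ∧ y ∈ 𝒜 γ := by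
    intro y
    have : y ∈ (⋃ α < (Cardinal.aleph 1).ord, (𝒜 α : Set A)) := by
      rw [hunion]; trivial
    simpa using this
  classical
  by_contra hcon
  push_neg at hcon
  obtain ⟨γx, hγx, hxmem⟩ := hmem x
  set O := Set.Iio (Cardinal.aleph 1).ord with hO
  haveI : Nonempty O := ⟨⟨0, aux_w1_isLimit.pos⟩⟩
  have H : ∀ γ : O, ∃ α : Ordinal, (γ : Ordinal) ≤ α ∧ α < (Cardinal.aleph 1).ord ∧
      ∃ hx : x ∈ 𝒜 α, ∃ g h : 𝒜 α → ℂ, IsState g ∧ IsState h ∧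
      (∀ z : 𝒜 α, f (z : A) = (g z + h z) / 2) ∧ ε < ‖g ⟨x, hx⟩ - h ⟨x, hx⟩‖ := by
    intro γ
    have hmax : max (γ : Ordinal) γx < (Cardinal.aleph 1).ord := max_lt γ.2 hγx
    have hxm : x ∈ 𝒜 (max (γ : Ordinal) γx) :=
      hmono γx _ (le_max_right _ _) hmax hxmem
    obtain ⟨α, hge, hlt, rest⟩ := hcon (max (γ : Ordinal) γx) hmax hxm
    exact ⟨α, le_trans (le_max_left _ _) hge, hlt, rest⟩
  choose lev hge hlt hx gfun hfun hg hh havg hdisc using H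
  haveI : (atTop : Filter O).NeBot := atTop_neBot
  set u : Ultrafilter O := Ultrafilter.of atTop with hu'
  have hu : (u : Filter O) ≤ atTop := Ultrafilter.of_le _
  set G : O → A → ℂ := fun γ y => if h : y ∈ 𝒜 (lev γ) then gfun γ ⟨y, h⟩ else 0 with hG
  set Hh : O → A → ℂ := fun γ y => if h : y ∈ 𝒜 (lev γ) then hfun γ ⟨y, h⟩ else 0 with hHh
  have hGval : ∀ (γ : O) (y : A) (h : y ∈ 𝒜 (lev γ)), G γ y = gfun γ ⟨y, h⟩ := by
    intro γ y h; simp only [hG]; exact dif_pos h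
  have hHval : ∀ (γ : O) (y : A) (h : y ∈ 𝒜 (lev γ)), Hh γ y = hfun γ ⟨y, h⟩ := by
    intro γ y h; simp only [hHh]; exact dif_pos h
  have boundG : ∀ (γ : O) (y : A), ‖G γ y‖ ≤ ‖y‖ := by
    intro γ y
    simp only [hG]
    by_cases h : y ∈ 𝒜 (lev γ)
    · rw [dif_pos h]; exact (hg γ).2.2.1 ⟨y, h⟩
    · rw [dif_neg h]; simpa using norm_nonneg y
  have boundH : ∀ (γ : O) (y : A), ‖Hh γ y‖ ≤ ‖y‖ := by
    intro γ y
    simp only [hHh]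
    by_cases h : y ∈ 𝒜 (lev γ)
    · rw [dif_pos h]; exact (hh γ).2.2.1 ⟨y, h⟩
    · rw [dif_neg h]; simpa using norm_nonneg y
  have ev_mem : ∀ y : A, ∀ᶠ γ : O in (u : Filter O), y ∈ 𝒜 (lev γ) := by
    intro y
    obtain ⟨γy, hγy, hymem⟩ := hmem y
    have h1 : Set.Ici (⟨γy, hγy⟩ : O) ∈ (u : Filter O) := hu (Ici_mem_atTop _)
    refine Filter.mem_of_superset h1 ?_
    intro γ hγ
    have : γy ≤ (γ : Ordinal) := hγ
    exact hmono γy (lev γ) (le_trans this (hge γ)) (hlt γ) hymem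
  have exlim : ∀ (v : O → ℂ) (r : ℝ), (∀ γ, ‖v γ‖ ≤ r) → ∃ c, Tendsto v (u : Filter O) (𝓝 c) := by
    intro v r hb
    have hc : IsCompact (Metric.closedBall (0:ℂ) r) := isCompact_closedBall 0 r
    have hmem' : Metric.closedBall (0:ℂ) r ∈ Ultrafilter.map v u := by
      rw [Ultrafilter.mem_map]
      refine Filter.Eventually.mono (Filter.Eventually.of_forall hb) ?_
      intro γ h
      simpa [Metric.mem_closedBall, dist_zero_right] using h
    obtain ⟨c, -, hle⟩ := hc.ultrafilter_le_nhds (Ultrafilter.map v u) (le_principal_iff.mpr hmem')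
    exact ⟨c, hle⟩
  have exG : ∀ y : A, ∃ c, Tendsto (fun γ => G γ y) (u : Filter O) (𝓝 c) :=
    fun y => exlim _ ‖y‖ (fun γ => boundG γ y)
  have exH : ∀ y : A, ∃ c, Tendsto (fun γ => Hh γ y) (u : Filter O) (𝓝 c) :=
    fun y => exlim _ ‖y‖ (fun γ => boundH γ y)
  choose gl hgl using exG
  choose hl hhl using exH
  -- average identity
  have avg : ∀ y : A, f y = (gl y + hl y) / 2 := by
    intro y
    have ht : Tendsto (fun γ => (G γ y + Hh γ y) / 2) (u : Filter O) (𝓝 ((gl y + hl y) / 2)) :=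
      ((hgl y).add (hhl y)).div_const 2
    have he : ∀ᶠ γ : O in (u : Filter O), (G γ y + Hh γ y) / 2 = f y := by
      refine (ev_mem y).mono (fun γ hy => ?_)
      rw [hGval γ y hy, hHval γ y hy]
      exact (havg γ ⟨y, hy⟩).symm
    exact (tendsto_nhds_unique (ht.congr' he) tendsto_const_nhds).symm
  -- additivity
  have gadd : ∀ y z : A, gl (y + z) = gl y + gl z := by
    intro y z
    have he : ∀ᶠ γ : O in (u : Filter O), G γ y + G γ z = G γ (y + z) := by
      refine ((ev_mem y).and (ev_mem z)).mono (fun γ hyz => ?_)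
      obtain ⟨hy, hz⟩ := hyz
      have hyzm : y + z ∈ 𝒜 (lev γ) := add_mem hy hz
      rw [hGval γ y hy, hGval γ z hz, hGval γ (y + z) hyzm]
      have e2 : (⟨y + z, hyzm⟩ : 𝒜 (lev γ)) = ⟨y, hy⟩ + ⟨z, hz⟩ := rfl
      rw [e2, (hg γ).1.map_add]
    exact (tendsto_nhds_unique (((hgl y).add (hgl z)).congr' he) (hgl (y + z))).symm
  have hadd : ∀ y z : A, hl (y + z) = hl y + hl z := by
    intro y z
    have he : ∀ᶠ γ : O in (u : Filter O), Hh γ y + Hh γ z = Hh γ (y + z) := by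
      refine ((ev_mem y).and (ev_mem z)).mono (fun γ hyz => ?_)
      obtain ⟨hy, hz⟩ := hyz
      have hyzm : y + z ∈ 𝒜 (lev γ) := add_mem hy hz
      rw [hHval γ y hy, hHval γ z hz, hHval γ (y + z) hyzm]
      have e2 : (⟨y + z, hyzm⟩ : 𝒜 (lev γ)) = ⟨y, hy⟩ + ⟨z, hz⟩ := rfl
      rw [e2, (hh γ).1.map_add]
    exact (tendsto_nhds_unique (((hhl y).add (hhl z)).congr' he) (hhl (y + z))).symm
  have gsmul : ∀ (c : ℂ) (y : A), gl (c • y) = c • gl y := by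
    intro c y
    have he : ∀ᶠ γ : O in (u : Filter O), c * G γ y = G γ (c • y) := by
      refine (ev_mem y).mono (fun γ hy => ?_)
      have hcy : c • y ∈ 𝒜 (lev γ) := SMulMemClass.smul_mem c hy
      rw [hGval γ y hy, hGval γ (c • y) hcy]
      have e2 : (⟨c • y, hcy⟩ : 𝒜 (lev γ)) = c • ⟨y, hy⟩ := rfl
      rw [e2, (hg γ).1.map_smul, smul_eq_mul]
    have := tendsto_nhds_unique (((hgl y).const_mul c).congr' he) (hgl (c • y))
    rw [smul_eq_mul, this]
  have hsmul : ∀ (c : ℂ) (y : A), hl (c • y) = c • hl y := by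
    intro c y
    have he : ∀ᶠ γ : O in (u : Filter O), c * Hh γ y = Hh γ (c • y) := by
      refine (ev_mem y).mono (fun γ hy => ?_)
      have hcy : c • y ∈ 𝒜 (lev γ) := SMulMemClass.smul_mem c hy
      rw [hHval γ y hy, hHval γ (c • y) hcy]
      have e2 : (⟨c • y, hcy⟩ : 𝒜 (lev γ)) = c • ⟨y, hy⟩ := rfl
      rw [e2, (hh γ).1.map_smul, smul_eq_mul]
    have := tendsto_nhds_unique (((hhl y).const_mul c).congr' he) (hhl (c • y))
    rw [smul_eq_mul, this]
  -- positivity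
  have gpos : ∀ y : A, 0 ≤ gl (star y * y) := by
    intro y
    have he : ∀ᶠ γ : O in (u : Filter O), G γ (star y * y) ∈ {c : ℂ | 0 ≤ c} := by
      refine (ev_mem y).mono (fun γ hy => ?_)
      have hyy : star y * y ∈ 𝒜 (lev γ) := mul_mem (star_mem hy) hy
      rw [Set.mem_setOf_eq, hGval γ _ hyy]
      have e2 : (⟨star y * y, hyy⟩ : 𝒜 (lev γ)) = star (⟨y, hy⟩ : 𝒜 (lev γ)) * ⟨y, hy⟩ := rfl
      rw [e2]
      exact (hg γ).2.1 _
    exact (isClosed_Ici (a := (0:ℂ))).mem_of_tendsto (hgl _) he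
  have hpos : ∀ y : A, 0 ≤ hl (star y * y) := by
    intro y
    have he : ∀ᶠ γ : O in (u : Filter O), Hh γ (star y * y) ∈ {c : ℂ | 0 ≤ c} := by
      refine (ev_mem y).mono (fun γ hy => ?_)
      have hyy : star y * y ∈ 𝒜 (lev γ) := mul_mem (star_mem hy) hy
      rw [Set.mem_setOf_eq, hHval γ _ hyy]
      have e2 : (⟨star y * y, hyy⟩ : 𝒜 (lev γ)) = star (⟨y, hy⟩ : 𝒜 (lev γ)) * ⟨y, hy⟩ := rfl
      rw [e2]
      exact (hh γ).2.1 _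
    exact (isClosed_Ici (a := (0:ℂ))).mem_of_tendsto (hhl _) he
  -- norm bounds
  have gbdd : ∀ y : A, ‖gl y‖ ≤ ‖y‖ := by
    intro y
    exact (isClosed_le continuous_norm continuous_const).mem_of_tendsto (hgl y)
      (Filter.Eventually.of_forall (fun γ => boundG γ y))
  have hbdd : ∀ y : A, ‖hl y‖ ≤ ‖y‖ := by
    intro y
    exact (isClosed_le continuous_norm continuous_const).mem_of_tendsto (hhl y)
      (Filter.Eventually.of_forall (fun γ => boundH γ y))
  -- norm one
  have gnorm1 : ∀ ε' : ℝ, 0 < ε' → ∃ y, ‖y‖ ≤ 1 ∧ 1 - ε' < ‖gl y‖ := by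
    intro ε' hε'
    obtain ⟨y, hy1, hyf⟩ := hf.1.2.2.2 (ε' / 2) (by positivity)
    exact ⟨y, hy1, aux_half (avg y) (le_trans (hbdd y) hy1) hyf⟩
  have hnorm1 : ∀ ε' : ℝ, 0 < ε' → ∃ y, ‖y‖ ≤ 1 ∧ 1 - ε' < ‖hl y‖ := by
    intro ε' hε'
    obtain ⟨y, hy1, hyf⟩ := hf.1.2.2.2 (ε' / 2) (by positivity)
    have havg' : f y = (hl y + gl y) / 2 := by rw [avg y]; ring
    exact ⟨y, hy1, aux_half havg' (le_trans (gbdd y) hy1) hyf⟩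
  have gstate : IsState gl := ⟨⟨gadd, gsmul⟩, gpos, gbdd, gnorm1⟩
  have hstate : IsState hl := ⟨⟨hadd, hsmul⟩, hpos, hbdd, hnorm1⟩
  have heq : gl = hl := hf.2 gl hl gstate hstate avg
  -- but the discrepancy at x survives the limit
  have hdx : ε ≤ ‖gl x - hl x‖ := by
    have he : ∀ γ : O, (G γ x - Hh γ x) ∈ {c : ℂ | ε ≤ ‖c‖} := by
      intro γ
      rw [Set.mem_setOf_eq, hGval γ x (hx γ), hHval γ x (hx γ)]
      exact le_of_lt (hdisc γ)
    exact (isClosed_le continuous_const continuous_norm).mem_of_tendsto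
      ((hgl x).sub (hhl x)) (Filter.Eventually.of_forall he)
  rw [heq, sub_self, norm_zero] at hdx
  exact absurd hdx (not_le.mpr hε)

lemma aux_dense_eq {C : Type*} [NonUnitalNormedRing C] [StarRing C] [Module ℂ C]
    {g h : C → ℂ} (hg : IsState g) (hh : IsState h)
    (hd : ∀ ε : ℝ, 0 < ε → ∀ z : C, ∃ w : C, ‖z - w‖ < ε ∧ g w = h w) : g = h := by
  funext z
  rw [← sub_eq_zero, ← norm_eq_zero]
  by_contra hne
  have hpos : 0 < ‖g z - h z‖ := lt_of_le_of_ne (norm_nonneg _) (Ne.symm hne)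
  obtain ⟨w, hw, hgw⟩ := hd (‖g z - h z‖ / 4) (by positivity) z
  have e1 : g z - h z = g (z - w) - h (z - w) := by
    rw [hg.1.map_sub, hh.1.map_sub, hgw]; ring
  have : ‖g z - h z‖ ≤ 2 * ‖z - w‖ := by
    rw [e1]
    calc ‖g (z - w) - h (z - w)‖ ≤ ‖g (z - w)‖ + ‖h (z - w)‖ := norm_sub_le _ _
      _ ≤ ‖z - w‖ + ‖z - w‖ := add_le_add (hg.2.2.1 _) (hh.2.2.1 _)
      _ = 2 * ‖z - w‖ := by ring
  linarith

lemma aux_restrict_state (𝒜 : Ordinal → NonUnitalStarSubalgebra ℂ A)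
    (f : A → ℂ) {β σ : Ordinal} (hβσ : ∀ y, y ∈ 𝒜 β → y ∈ 𝒜 σ)
    (hfβ : IsState (f ∘ Subtype.val : 𝒜 β → ℂ))
    {g h : 𝒜 σ → ℂ} (hg : IsState g) (hh : IsState h)
    (havg : ∀ z : 𝒜 σ, f (z : A) = (g z + h z) / 2) :
    IsState (fun t : 𝒜 β => g ⟨(t : A), hβσ t t.2⟩) := by
  refine ⟨⟨fun a b => ?_, fun c a => ?_⟩, fun t => ?_, fun t => ?_, fun ε hε => ?_⟩
  · have e : (⟨((a + b : 𝒜 β) : A), hβσ _ (a + b).2⟩ : 𝒜 σ)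
        = ⟨(a : A), hβσ a a.2⟩ + ⟨(b : A), hβσ b b.2⟩ := rfl
    rw [e, hg.1.map_add]
  · have e : (⟨((c • a : 𝒜 β) : A), hβσ _ (c • a).2⟩ : 𝒜 σ)
        = c • ⟨(a : A), hβσ a a.2⟩ := rfl
    rw [e, hg.1.map_smul]
  · show 0 ≤ g ⟨((star t * t : 𝒜 β) : A), hβσ _ (star t * t).2⟩
    have e : (⟨((star t * t : 𝒜 β) : A), hβσ _ (star t * t).2⟩ : 𝒜 σ)
        = star (⟨(t : A), hβσ t t.2⟩ : 𝒜 σ) * ⟨(t : A), hβσ t t.2⟩ := rfl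
    rw [e]
    exact hg.2.1 _
  · exact hg.2.2.1 _
  · obtain ⟨y, hy1, hyf⟩ := hfβ.2.2.2 (ε / 2) (by positivity)
    refine ⟨y, hy1, ?_⟩
    have e : f ((y : A)) = (g ⟨(y : A), hβσ y y.2⟩ + h ⟨(y : A), hβσ y y.2⟩) / 2 :=
      havg ⟨(y : A), hβσ y y.2⟩
    exact aux_half e (le_trans (hh.2.2.1 _) hy1) hyf

universe uu

lemma aux_iSup_lt {ι : Type} [Countable ι] (v : ι → Ordinal.{uu})
    (h : ∀ i, v i < (Cardinal.aleph 1).ord) : iSup v < (Cardinal.aleph 1).ord := by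
  apply Cardinal.iSup_lt_ord_lift_of_isRegular Cardinal.isRegular_aleph_one
    (lt_of_le_of_lt (Cardinal.lift_le.mpr Cardinal.mk_le_aleph0)
      (by rw [Cardinal.lift_aleph0]; exact Cardinal.aleph0_lt_aleph_one)) h

lemma aux_sSup_lt (S : Set Ordinal) (hS : S.Countable) (hne : S.Nonempty)
    (h : ∀ x ∈ S, x < (Cardinal.aleph 1).ord) : sSup S < (Cardinal.aleph 1).ord := by
  obtain ⟨v, rfl⟩ := Set.Countable.exists_eq_range hS hne
  show iSup v < _
  apply Cardinal.iSup_lt_ord_lift_of_isRegular Cardinal.isRegular_aleph_one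
    (by rw [Cardinal.mk_nat, Cardinal.lift_aleph0]; exact Cardinal.aleph0_lt_aleph_one)
  exact fun n => h (v n) ⟨n, rfl⟩

theorem stmt_12 (𝒜 : Ordinal → NonUnitalStarSubalgebra ℂ A)
    (hclosed : ∀ α, α < (Cardinal.aleph 1).ord → IsClosed (𝒜 α : Set A))
    (hsep : ∀ α, α < (Cardinal.aleph 1).ord →
      TopologicalSpace.SeparableSpace (𝒜 α))
    (hmono : ∀ β α, β ≤ α → α < (Cardinal.aleph 1).ord → 𝒜 β ≤ 𝒜 α)
    (hcont : ∀ α, α < (Cardinal.aleph 1).ord → Order.IsSuccLimit α →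
      (𝒜 α : Set A) = closure (⋃ β < α, (𝒜 β : Set A)))
    (hunion : (⋃ α < (Cardinal.aleph 1).ord, (𝒜 α : Set A)) = Set.univ)
    (f : A → ℂ) (hf : IsPureState f) :
    (∀ S₀ ⊆ {α | α < (Cardinal.aleph 1).ord ∧
        IsPureState (f ∘ Subtype.val : 𝒜 α → ℂ)},
      S₀.Nonempty → S₀.Countable →
      sSup S₀ ∈ {α | α < (Cardinal.aleph 1).ord ∧
        IsPureState (f ∘ Subtype.val : 𝒜 α → ℂ)}) ∧
    ∀ α < (Cardinal.aleph 1).ord, ∃ β, β < (Cardinal.aleph 1).ord ∧ α < β ∧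
      IsPureState (f ∘ Subtype.val : 𝒜 β → ℂ) := by
  constructor
  · -- closedness
    intro S₀ hsub hne hcount
    have hbdd : BddAbove S₀ := ⟨(Cardinal.aleph 1).ord, fun x hx => le_of_lt (hsub hx).1⟩
    have hσlt : sSup S₀ < (Cardinal.aleph 1).ord :=
      aux_sSup_lt S₀ hcount hne (fun x hx => (hsub hx).1)
    by_cases hin : sSup S₀ ∈ S₀
    · exact hsub hin
    · set σ := sSup S₀ with hσ
      have hex : ∀ a, a < σ → ∃ b ∈ S₀, a < b := by
        intro a ha
        by_contra hc
        push_neg at hc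
        exact absurd (csSup_le hne hc) (not_le.mpr ha)
      have hlimit : Order.IsSuccLimit σ := by
        rw [Ordinal.isSuccLimit_iff, Order.isSuccPrelimit_iff_succ_lt]
        constructor
        · obtain ⟨b, hb⟩ := hne
          have hbσ : b ≤ σ := le_csSup hbdd hb
          have : b ≠ σ := fun e => hin (e ▸ hb)
          intro h0
          exact this (le_antisymm hbσ (h0 ▸ zero_le (a := b)))
        · intro a ha
          obtain ⟨b, hbS, hab⟩ := hex a ha
          have h1 : Order.succ a ≤ b := Order.succ_le_of_lt hab
          have h2 : b ≤ σ := le_csSup hbdd hbS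
          rcases lt_or_eq_of_le (le_trans h1 h2) with h | h
          · exact h
          · exfalso
            apply hin
            have hbeq : b = σ := le_antisymm h2 (h ▸ h1)
            exact hbeq ▸ hbS
      refine ⟨hσlt, ⟨⟨fun a b => ?_, fun c a => ?_⟩, fun t => ?_, fun t => ?_,
        fun ε hε => ?_⟩, ?_⟩
      · exact hf.1.1.map_add (a : A) (b : A)
      · exact hf.1.1.map_smul c (a : A)
      · exact hf.1.2.1 (t : A)
      · exact hf.1.2.2.1 (t : A)
      · obtain ⟨β, hβ⟩ := hne
        obtain ⟨x, hx1, hx2⟩ := (hsub hβ).2.1.2.2.2 ε hε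
        exact ⟨⟨(x : A), hmono β σ (le_csSup hbdd hβ) hσlt x.2⟩, hx1, hx2⟩
      · intro g h hg hh havg
        refine aux_dense_eq hg hh ?_
        intro ε hε z
        have hz : (z : A) ∈ closure (⋃ γ < σ, (𝒜 γ : Set A)) := by
          rw [← hcont σ hσlt hlimit]; exact z.2
        obtain ⟨y, hyU, hdist⟩ := Metric.mem_closure_iff.mp hz ε hε
        simp only [Set.mem_iUnion] at hyU
        obtain ⟨γ, hγσ, hyγ⟩ := hyU
        obtain ⟨β, hβS, hγβ⟩ := hex γ hγσ
        have hβlt : β < (Cardinal.aleph 1).ord := (hsub hβS).1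
        have hyβ : y ∈ 𝒜 β := hmono γ β (le_of_lt hγβ) hβlt hyγ
        have hβσf : ∀ w, w ∈ 𝒜 β → w ∈ 𝒜 σ :=
          fun w hw => hmono β σ (le_csSup hbdd hβS) hσlt hw
        refine ⟨⟨y, hβσf y hyβ⟩, ?_, ?_⟩
        · show ‖(z : A) - y‖ < ε
          rw [← dist_eq_norm]
          exact hdist
        · have hfβstate : IsState (f ∘ Subtype.val : 𝒜 β → ℂ) := (hsub hβS).2.1
          have havg'' : ∀ z : 𝒜 σ, f (z : A) = (g z + h z) / 2 := fun z => havg z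
          have havg' : ∀ z : 𝒜 σ, f (z : A) = (h z + g z) / 2 := by
            intro z; rw [havg'' z]; ring
          have hgr := aux_restrict_state 𝒜 f hβσf hfβstate hg hh havg''
          have hhr := aux_restrict_state 𝒜 f hβσf hfβstate hh hg havg'
          have havgr : ∀ t : 𝒜 β, (f ∘ Subtype.val) t =
              ((fun t : 𝒜 β => g ⟨(t : A), hβσf t t.2⟩) t +
               (fun t : 𝒜 β => h ⟨(t : A), hβσf t t.2⟩) t) / 2 :=
            fun t => havg ⟨(t : A), hβσf t t.2⟩
          have heq := (hsub hβS).2.2 _ _ hgr hhr havgr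
          exact congrFun heq ⟨y, hyβ⟩
  · -- unboundedness
    intro α₀ hα₀
    have hmem : ∀ y : A, ∃ γ, γ < (Cardinal.aleph 1).ord ∧ y ∈ 𝒜 γ := by
      intro y
      have : y ∈ (⋃ α < (Cardinal.aleph 1).ord, (𝒜 α : Set A)) := by
        rw [hunion]; trivial
      simpa using this
    -- levels containing norm witnesses for f
    have hwit : ∀ n : ℕ, ∃ γ, γ < (Cardinal.aleph 1).ord ∧
        ∃ x, x ∈ 𝒜 γ ∧ ‖x‖ ≤ 1 ∧ 1 - 1 / (n + 1) < ‖f x‖ := by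
      intro n
      obtain ⟨x, hx1, hx2⟩ := hf.1.2.2.2 (1 / (n + 1)) (by positivity)
      obtain ⟨γ, hγ, hγm⟩ := hmem x
      exact ⟨γ, hγ, x, hγm, hx1, hx2⟩
    choose ν hνlt xw hxwmem hxw1 hxwf using hwit
    have hsucc : α₀ + 1 < (Cardinal.aleph 1).ord := by
      rw [Ordinal.add_one_eq_succ]
      exact aux_w1_isLimit.succ_lt hα₀
    set θ₀ : Ordinal := max (iSup ν) (α₀ + 1) with hθ₀def
    have hθ₀ : θ₀ < (Cardinal.aleph 1).ord := max_lt (aux_iSup_lt ν hνlt) hsucc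
    -- the step function
    have Hstep : ∀ δ : Ordinal, δ < (Cardinal.aleph 1).ord → ∃ η,
        δ < η ∧ η < (Cardinal.aleph 1).ord ∧ ∀ α, η ≤ α → α < (Cardinal.aleph 1).ord →
        ∀ g h : 𝒜 α → ℂ, IsState g → IsState h →
        (∀ z : 𝒜 α, f (z : A) = (g z + h z) / 2) →
        ∀ y, y ∈ 𝒜 δ → ∀ ε : ℝ, 0 < ε →
        ∃ w, ∃ hw : w ∈ 𝒜 α, ‖y - w‖ < ε ∧ g ⟨w, hw⟩ = h ⟨w, hw⟩ := by
      intro δ hδ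
      haveI := hsep δ hδ
      haveI : Nonempty (𝒜 δ) := ⟨0⟩
      obtain ⟨e, he⟩ := TopologicalSpace.exists_dense_seq (𝒜 δ)
      have hkey : ∀ p : ℕ × ℕ, ∃ γ₀, γ₀ < (Cardinal.aleph 1).ord ∧
          ((e p.1 : A) ∈ 𝒜 γ₀) ∧ ∀ α, γ₀ ≤ α → α < (Cardinal.aleph 1).ord →
          ∀ (hx : (e p.1 : A) ∈ 𝒜 α) (g h : 𝒜 α → ℂ), IsState g → IsState h →
          (∀ z : 𝒜 α, f (z : A) = (g z + h z) / 2) →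
          ‖g ⟨(e p.1 : A), hx⟩ - h ⟨(e p.1 : A), hx⟩‖ ≤ 1 / (p.2 + 1) :=
        fun p => aux_key 𝒜 hmono hunion f hf (e p.1 : A) (1 / (p.2 + 1)) (by positivity)
      choose κ hκlt hκmem hκ using hkey
      refine ⟨max (iSup κ) (δ + 1), ?_, ?_, ?_⟩
      · exact lt_of_lt_of_le (lt_add_one δ) (le_max_right _ _)
      · refine max_lt (aux_iSup_lt κ hκlt) ?_
        rw [Ordinal.add_one_eq_succ]
        exact aux_w1_isLimit.succ_lt hδ
      · intro α hηα hα g h hg hh havg y hy ε hε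
        obtain ⟨m, hm⟩ := Metric.denseRange_iff.mp he ⟨y, hy⟩ ε hε
        have hδα : δ ≤ α := le_trans (le_of_lt (lt_add_one δ))
          (le_trans (le_max_right _ _) hηα)
        have hwα : (e m : A) ∈ 𝒜 α := hmono δ α hδα hα (e m).2
        refine ⟨(e m : A), hwα, ?_, ?_⟩
        · show ‖y - (e m : A)‖ < ε
          rw [← dist_eq_norm]
          exact hm
        · have hall : ∀ k : ℕ, ‖g ⟨(e m : A), hwα⟩ - h ⟨(e m : A), hwα⟩‖ ≤ 1 / (k + 1) := by
            intro k
            have hle : κ (m, k) ≤ α :=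
              le_trans (le_trans (Ordinal.le_iSup κ (m, k)) (le_max_left _ _)) hηα
            exact hκ (m, k) α hle hα hwα g h hg hh havg
          have h0 : ‖g ⟨(e m : A), hwα⟩ - h ⟨(e m : A), hwα⟩‖ ≤ 0 := by
            refine ge_of_tendsto' tendsto_one_div_add_atTop_nhds_zero_nat ?_
            intro k
            simpa using hall k
          have := le_antisymm h0 (norm_nonneg _)
          rwa [norm_eq_zero, sub_eq_zero] at this
    choose step hstep1 hstep2 hstep3 using Hstep
    -- the increasing sequence
    let s : ℕ → {o : Ordinal // o < (Cardinal.aleph 1).ord} := fun n =>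
      Nat.rec ⟨θ₀, hθ₀⟩ (fun _ p => ⟨step p.1 p.2, hstep2 p.1 p.2⟩) n
    have hs0 : (s 0).1 = θ₀ := rfl
    have hsrec : ∀ n, (s (n + 1)).1 = step (s n).1 (s n).2 := fun n => rfl
    set β : Ordinal := iSup (fun n => (s n).1) with hβdef
    have hβlt : β < (Cardinal.aleph 1).ord := aux_iSup_lt _ (fun n => (s n).2)
    have hsβ : ∀ n, (s n).1 ≤ β := fun n => Ordinal.le_iSup (fun n => (s n).1) n
    have hθβ : θ₀ ≤ β := hs0 ▸ hsβ 0
    have hβgt : α₀ < β :=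
      lt_of_lt_of_le (lt_add_one α₀) (le_trans (le_max_right _ _) hθβ)
    have hsmono : ∀ n, (s n).1 < (s (n + 1)).1 := by
      intro n
      rw [hsrec n]
      exact hstep1 _ _
    have hβlimit : Order.IsSuccLimit β := by
      rw [Ordinal.isSuccLimit_iff, Order.isSuccPrelimit_iff_succ_lt]
      constructor
      · exact pos_iff_ne_zero.mp (lt_of_le_of_lt (zero_le (a := α₀)) hβgt)
      · intro a ha
        rw [hβdef] at ha
        obtain ⟨n, hn⟩ := Ordinal.lt_iSup_iff.mp ha
        have h1 : Order.succ a ≤ (s n).1 := Order.succ_le_of_lt hn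
        exact lt_of_le_of_lt h1 (lt_of_lt_of_le (hsmono n) (hsβ (n + 1)))
    refine ⟨β, hβlt, hβgt, ⟨⟨fun a b => ?_, fun c a => ?_⟩, fun t => ?_, fun t => ?_,
      fun ε hε => ?_⟩, ?_⟩
    · exact hf.1.1.map_add (a : A) (b : A)
    · exact hf.1.1.map_smul c (a : A)
    · exact hf.1.2.1 (t : A)
    · exact hf.1.2.2.1 (t : A)
    · obtain ⟨n, hn⟩ := exists_nat_one_div_lt hε
      have hνβ : ν n ≤ β := le_trans (le_trans (Ordinal.le_iSup ν n) (le_max_left _ _)) hθβ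
      refine ⟨⟨xw n, hmono (ν n) β hνβ hβlt (hxwmem n)⟩, hxw1 n, ?_⟩
      have : 1 - ε < 1 - 1 / (n + 1) := by
        have : (1:ℝ) / (n + 1) < ε := by exact_mod_cast hn
        linarith
      exact lt_trans this (hxwf n)
    · intro g h hg hh havg
      refine aux_dense_eq hg hh ?_
      intro ε hε z
      have havg'' : ∀ z : 𝒜 β, f (z : A) = (g z + h z) / 2 := fun z => havg z
      have hz : (z : A) ∈ closure (⋃ γ < β, (𝒜 γ : Set A)) := by
        rw [← hcont β hβlt hβlimit]; exact z.2
      obtain ⟨y, hyU, hdist⟩ := Metric.mem_closure_iff.mp hz (ε / 2) (by positivity)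
      simp only [Set.mem_iUnion] at hyU
      obtain ⟨γ, hγβ, hyγ⟩ := hyU
      have hγβ' : γ < iSup (fun n => (s n).1) := hβdef ▸ hγβ
      obtain ⟨n, hγn⟩ := Ordinal.lt_iSup_iff.mp hγβ'
      have hyn : y ∈ 𝒜 (s n).1 := hmono γ (s n).1 (le_of_lt hγn) (s n).2 hyγ
      have hstepβ : step (s n).1 (s n).2 ≤ β := (hsrec n) ▸ hsβ (n + 1)
      obtain ⟨w, hwβ, hwdist, hgw⟩ := hstep3 (s n).1 (s n).2 β hstepβ hβlt g h hg hh
        havg'' y hyn (ε / 2) (by positivity)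
      refine ⟨⟨w, hwβ⟩, ?_, hgw⟩
      show ‖(z : A) - w‖ < ε
      have e1 : (z : A) - w = ((z : A) - y) + (y - w) := (sub_add_sub_cancel _ _ _).symm
      have h1 : ‖(z : A) - y‖ < ε / 2 := by rw [← dist_eq_norm]; exact hdist
      calc ‖(z : A) - w‖ ≤ ‖(z : A) - y‖ + ‖y - w‖ := by rw [e1]; exact norm_add_le _ _
        _ < ε / 2 + ε / 2 := add_lt_add h1 hwdist
        _ = ε := by ring
end
end

section
/- Let f be a pure state on a C*-algebra A = ⋃_{α<ω₁} A_α, where (A_α)_{α<ω₁} is a continuous nested family of separable subalgebras, and let x ∈ A_α. Then there exists α' ≥ α such that for all β ≥ α', whenever f|_{A_β} = (f₁+f₂)/2 with f₁, f₂ states on A_β, one has f₁(x) = f₂(x). -/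
open scoped ComplexOrder
open Filter Topology

section
variable {A : Type*} [NonUnitalNormedRing A] [StarRing A] [CStarRing A]
  [NormedSpace ℂ A] [IsScalarTower ℂ A A] [SMulCommClass ℂ A A] [StarModule ℂ A]
  [CompleteSpace A]

private lemma complex_isClosed_nonneg : IsClosed {z : ℂ | 0 ≤ z} := by
  have h : {z : ℂ | 0 ≤ z} = Complex.re ⁻¹' Set.Ici 0 ∩ Complex.im ⁻¹' {0} := by
    ext z
    simp [Complex.le_def, eq_comm]
  rw [h]
  exact (isClosed_Ici.preimage Complex.continuous_re).inter
    (isClosed_singleton.preimage Complex.continuous_im)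

private lemma exists_ultra_lim {ι : Type*} (U : Ultrafilter ι) (φ : ι → ℂ) {M : ℝ}
    (h : ∀ i, ‖φ i‖ ≤ M) : ∃ c, Filter.Tendsto φ U (𝓝 c) ∧ ‖c‖ ≤ M := by
  have hK : IsCompact (Metric.closedBall (0 : ℂ) M) := isCompact_closedBall _ _
  have hle : ↑(U.map φ) ≤ Filter.principal (Metric.closedBall (0 : ℂ) M) := by
    rw [Filter.le_principal_iff]
    exact Filter.mem_map.2 (Filter.univ_mem' fun i => by
      simpa [Metric.mem_closedBall, dist_eq_norm] using h i)
  obtain ⟨c, hc, hc2⟩ := hK.ultrafilter_le_nhds (U.map φ) hle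
  refine ⟨c, ?_, by simpa [Metric.mem_closedBall, dist_eq_norm] using hc⟩
  exact hc2

private lemma state_norm_cond {C : Type*} [NonUnitalNormedRing C] [StarRing C] [NormedSpace ℂ C]
    (f g h : C → ℂ) (hf : IsState f) (hh : ∀ y, ‖h y‖ ≤ ‖y‖)
    (havg : ∀ y, f y = (g y + h y) / 2) :
    ∀ ε : ℝ, 0 < ε → ∃ y, ‖y‖ ≤ 1 ∧ 1 - ε < ‖g y‖ := by
  intro ε hε
  obtain ⟨y₀, hy₀, hfy₀⟩ := hf.2.2.2 (min ε 1 / 2) (by positivity)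
  set c := f y₀ with hc
  have hmin : min ε 1 ≤ 1 := min_le_right _ _
  have hcpos : (0 : ℝ) < ‖c‖ := lt_of_lt_of_le (by linarith) hfy₀.le
  have hc0 : c ≠ 0 := norm_pos_iff.1 hcpos
  set u : ℂ := (‖c‖ : ℂ) / c with hu
  set y := u • y₀ with hy
  have hnu : ‖u‖ = 1 := by
    rw [hu, norm_div, Complex.norm_real, Real.norm_eq_abs, abs_of_pos hcpos, div_self hcpos.ne']
  have hny : ‖y‖ ≤ 1 := by
    rw [hy, norm_smul, hnu, one_mul]; exact hy₀
  have hfy : f y = (‖c‖ : ℂ) := by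
    rw [hy, hf.1.map_smul, smul_eq_mul, ← hc, hu, div_mul_cancel₀ _ hc0]
  have hgy : g y = 2 * f y - h y := by linear_combination (-2 : ℂ) * (havg y)
  have hre : (g y).re = 2 * ‖c‖ - (h y).re := by
    rw [hgy, hfy]; simp
  have h1 : (h y).re ≤ ‖h y‖ := by
    simpa using Complex.re_le_norm (h y)
  have h2 : ‖h y‖ ≤ 1 := le_trans (hh y) hny
  have h3 : (g y).re ≤ ‖g y‖ := by
    simpa using Complex.re_le_norm (g y)
  have hεε : min ε 1 ≤ ε := min_le_left _ _
  exact ⟨y, hny, by linarith⟩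

/- Statement 13 (the claim in the proof of Lemma 4): let `(A_α)_{α<ω₁}` be a
continuous nested transfinite sequence of separable C*-subalgebras with union
the whole C*-algebra `A`, let `f` be a pure state on `A` and let `x ∈ A_α`.
Then there is `α' ≥ α` (with `α' < ω₁`) such that for every `β` with
`α' ≤ β < ω₁`, `f|_{A_β}` is pure on `x`: whenever `f|_{A_β} = (f₁ + f₂)/2`
with `f₁, f₂` states on `A_β`, one has `f₁(x) = f₂(x)`. -/
theorem stmt_13 (𝒜 : Ordinal → NonUnitalStarSubalgebra ℂ A)
    (hclosed : ∀ α, α < (Cardinal.aleph 1).ord → IsClosed (𝒜 α : Set A))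
    (hsep : ∀ α, α < (Cardinal.aleph 1).ord →
      TopologicalSpace.SeparableSpace (𝒜 α))
    (hmono : ∀ β α, β ≤ α → α < (Cardinal.aleph 1).ord → 𝒜 β ≤ 𝒜 α)
    (hcont : ∀ α, α < (Cardinal.aleph 1).ord → Order.IsSuccLimit α →
      (𝒜 α : Set A) = closure (⋃ β < α, (𝒜 β : Set A)))
    (hunion : (⋃ α < (Cardinal.aleph 1).ord, (𝒜 α : Set A)) = Set.univ)
    (f : A → ℂ) (hf : IsPureState f)
    (α : Ordinal) (hα : α < (Cardinal.aleph 1).ord) (x : A) (hx : x ∈ 𝒜 α) :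
    ∃ α', α ≤ α' ∧ α' < (Cardinal.aleph 1).ord ∧
      ∀ β, α' ≤ β → β < (Cardinal.aleph 1).ord →
        ∀ f₁ f₂ : 𝒜 β → ℂ, IsState f₁ → IsState f₂ →
          (∀ z : 𝒜 β, f (z : A) = (f₁ z + f₂ z) / 2) →
          ∀ hx' : x ∈ 𝒜 β, f₁ ⟨x, hx'⟩ = f₂ ⟨x, hx'⟩ := by
  classical
  by_contra hcon
  push_neg at hcon
  set κ := (Cardinal.aleph 1).ord with hκdef
  set Bad : Ordinal → Prop := fun β => α ≤ β ∧ β < κ ∧ ∃ f₁ f₂ : 𝒜 β → ℂ,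
      IsState f₁ ∧ IsState f₂ ∧ (∀ z : 𝒜 β, f (z : A) = (f₁ z + f₂ z) / 2) ∧
      ∃ hx' : x ∈ 𝒜 β, f₁ ⟨x, hx'⟩ ≠ f₂ ⟨x, hx'⟩ with hBaddef
  have hBadUnb : ∀ γ, γ < κ → ∃ β, Bad β ∧ γ ≤ β := by
    intro γ hγ
    obtain ⟨β, h1, h2, f₁, f₂, hs1, hs2, h3, hx', h4⟩ :=
      hcon (max α γ) (le_max_left _ _) (max_lt hα hγ)
    exact ⟨β, ⟨le_trans (le_max_left _ _) h1, h2, f₁, f₂, hs1, hs2, h3, hx', h4⟩,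
      le_trans (le_max_right _ _) h1⟩
  have hxmem : ∀ β, Bad β → x ∈ 𝒜 β := fun β hb => hmono α β hb.1 hb.2.1 hx
  have hsel : ∀ β, ∀ hb : Bad β, ∃ p : (𝒜 β → ℂ) × (𝒜 β → ℂ),
      IsState p.1 ∧ IsState p.2 ∧ (∀ z : 𝒜 β, f (z : A) = (p.1 z + p.2 z) / 2) ∧
      p.1 ⟨x, hxmem β hb⟩ ≠ p.2 ⟨x, hxmem β hb⟩ := by
    intro β hb
    obtain ⟨f₁, f₂, hs1, hs2, h3, hx', h4⟩ := hb.2.2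
    exact ⟨(f₁, f₂), hs1, hs2, h3, h4⟩
  choose P hP1 hP2 hP3 hP4 using hsel
  set d : Ordinal → ℂ := fun β =>
    if hb : Bad β then (P β hb).1 ⟨x, hxmem β hb⟩ - (P β hb).2 ⟨x, hxmem β hb⟩ else 0
    with hddef
  have hd : ∀ β (hb : Bad β), d β ≠ 0 := by
    intro β hb
    simp only [hddef, dif_pos hb]
    exact sub_ne_zero.2 (hP4 β hb)
  -- pigeonhole to get a uniform ε₀ on an unbounded set
  have hT : ∃ n : ℕ, ∀ γ, γ < κ → ∃ β, Bad β ∧ 1 / (n + 1 : ℝ) ≤ ‖d β‖ ∧ γ ≤ β := by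
    by_contra hno
    push_neg at hno
    choose γn hγnκ hγnbd using hno
    have hΓ : iSup γn < κ := by
      apply Ordinal.iSup_lt_ord_lift ?_ hγnκ
      rw [Cardinal.mk_nat, Cardinal.lift_aleph0, hκdef, Cardinal.isRegular_aleph_one.cof_eq]
      exact Cardinal.aleph0_lt_aleph_one
    obtain ⟨β, hb, hβΓ⟩ := hBadUnb _ hΓ
    have h0 : 0 < ‖d β‖ := norm_pos_iff.2 (hd β hb)
    obtain ⟨n, hn⟩ := exists_nat_one_div_lt h0
    have := hγnbd n β hb hn.le
    exact absurd (le_trans (Ordinal.le_iSup γn n) hβΓ) (not_le.2 (lt_of_lt_of_le this le_rfl))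
  obtain ⟨n, hT⟩ := hT
  set ε₀ : ℝ := 1 / (n + 1 : ℝ) with hε₀def
  have hε₀ : 0 < ε₀ := by positivity
  -- the ultrafilter
  haveI hne : Nonempty (Set.Iio κ) := ⟨⟨α, hα⟩⟩
  set Fs : Set.Iio κ → Filter Ordinal := fun γ =>
    Filter.principal {β | (Bad β ∧ ε₀ ≤ ‖d β‖) ∧ (γ : Ordinal) ≤ β} with hFsdef
  have hFdir : Directed (· ≥ ·) Fs := by
    intro γ₁ γ₂
    refine ⟨⟨max γ₁ γ₂, Set.mem_Iio.2 (max_lt (Set.mem_Iio.1 γ₁.2) (Set.mem_Iio.1 γ₂.2))⟩, ?_, ?_⟩ <;>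
      · simp only [hFsdef, ge_iff_le, Filter.principal_mono]
        intro β hb
        exact ⟨hb.1, le_trans (by simp [le_max_left, le_max_right]) hb.2⟩
  haveI hFne : ∀ γ, (Fs γ).NeBot := by
    intro γ
    rw [hFsdef]
    refine Filter.principal_neBot_iff.2 ?_
    obtain ⟨β, hb, hd0, hγβ⟩ := hT γ γ.2
    exact ⟨β, ⟨hb, hd0⟩, hγβ⟩
  haveI hFbot : (⨅ γ, Fs γ).NeBot := Filter.iInf_neBot_of_directed' hFdir hFne
  set U : Ultrafilter Ordinal := Ultrafilter.of (⨅ γ, Fs γ) with hUdef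
  have hUle : ↑U ≤ ⨅ γ, Fs γ := Ultrafilter.of_le _
  have hUmem : ∀ γ, γ < κ → {β | (Bad β ∧ ε₀ ≤ ‖d β‖) ∧ γ ≤ β} ∈ U := by
    intro γ hγ
    exact hUle (Filter.mem_iInf_of_mem ⟨γ, hγ⟩ (Filter.mem_principal_self _))
  have hEv : ∀ a : A, ∀ᶠ β in (U : Filter Ordinal), (Bad β ∧ ε₀ ≤ ‖d β‖) ∧ a ∈ 𝒜 β := by
    intro a
    obtain ⟨γ, hγ, hmem⟩ : ∃ γ, γ < κ ∧ a ∈ 𝒜 γ := by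
      have h1 : a ∈ ⋃ γ < κ, (𝒜 γ : Set A) := by rw [hunion]; trivial
      simpa using h1
    filter_upwards [hUmem γ hγ] with β hb
    exact ⟨hb.1, hmono γ β hb.2 hb.1.1.2.1 hmem⟩
  -- the approximating functionals
  set s₁ : Ordinal → A → ℂ := fun β a =>
    if hb : Bad β then (if ha : a ∈ 𝒜 β then (P β hb).1 ⟨a, ha⟩ else 0) else 0 with hs₁def
  set s₂ : Ordinal → A → ℂ := fun β a =>
    if hb : Bad β then (if ha : a ∈ 𝒜 β then (P β hb).2 ⟨a, ha⟩ else 0) else 0 with hs₂def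
  have hs₁bd : ∀ β a, ‖s₁ β a‖ ≤ ‖a‖ := by
    intro β a
    by_cases hb : Bad β
    · by_cases ha : a ∈ 𝒜 β
      · simp only [hs₁def, dif_pos hb, dif_pos ha]
        exact (hP1 β hb).2.2.1 ⟨a, ha⟩
      · simp [hs₁def, hb, ha]
    · simp [hs₁def, hb]
  have hs₂bd : ∀ β a, ‖s₂ β a‖ ≤ ‖a‖ := by
    intro β a
    by_cases hb : Bad β
    · by_cases ha : a ∈ 𝒜 β
      · simp only [hs₂def, dif_pos hb, dif_pos ha]
        exact (hP2 β hb).2.2.1 ⟨a, ha⟩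
      · simp [hs₂def, hb, ha]
    · simp [hs₂def, hb]
  choose g hg hgbd using fun a : A => exists_ultra_lim U (fun β => s₁ β a) (fun β => hs₁bd β a)
  choose h hh hhbd using fun a : A => exists_ultra_lim U (fun β => s₂ β a) (fun β => hs₂bd β a)
  -- linearity
  have hgadd : ∀ a b : A, g (a + b) = g a + g b := by
    intro a b
    refine tendsto_nhds_unique (hg (a + b)) (Filter.Tendsto.congr' ?_ ((hg a).add (hg b)))
    filter_upwards [hEv a, hEv b] with β hba hbb
    obtain ⟨⟨hb, -⟩, ha⟩ := hba
    obtain ⟨-, hbm⟩ := hbb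
    have hab : a + b ∈ 𝒜 β := add_mem ha hbm
    simp only [hs₁def, dif_pos hb, dif_pos ha, dif_pos hbm, dif_pos hab]
    have he : (⟨a + b, hab⟩ : 𝒜 β) = ⟨a, ha⟩ + ⟨b, hbm⟩ := by ext; simp
    rw [he, (hP1 β hb).1.map_add]
  have hgsmul : ∀ (c : ℂ) (a : A), g (c • a) = c • g a := by
    intro c a
    refine tendsto_nhds_unique (hg (c • a)) (Filter.Tendsto.congr' ?_ ((hg a).const_smul c))
    filter_upwards [hEv a] with β hba
    obtain ⟨⟨hb, -⟩, ha⟩ := hba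
    have hca : c • a ∈ 𝒜 β := SMulMemClass.smul_mem c ha
    simp only [hs₁def, dif_pos hb, dif_pos ha, dif_pos hca]
    have he : (⟨c • a, hca⟩ : 𝒜 β) = c • (⟨a, ha⟩ : 𝒜 β) := by ext; simp
    rw [he, (hP1 β hb).1.map_smul]
  have hhadd : ∀ a b : A, h (a + b) = h a + h b := by
    intro a b
    refine tendsto_nhds_unique (hh (a + b)) (Filter.Tendsto.congr' ?_ ((hh a).add (hh b)))
    filter_upwards [hEv a, hEv b] with β hba hbb
    obtain ⟨⟨hb, -⟩, ha⟩ := hba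
    obtain ⟨-, hbm⟩ := hbb
    have hab : a + b ∈ 𝒜 β := add_mem ha hbm
    simp only [hs₂def, dif_pos hb, dif_pos ha, dif_pos hbm, dif_pos hab]
    have he : (⟨a + b, hab⟩ : 𝒜 β) = ⟨a, ha⟩ + ⟨b, hbm⟩ := by ext; simp
    rw [he, (hP2 β hb).1.map_add]
  have hhsmul : ∀ (c : ℂ) (a : A), h (c • a) = c • h a := by
    intro c a
    refine tendsto_nhds_unique (hh (c • a)) (Filter.Tendsto.congr' ?_ ((hh a).const_smul c))
    filter_upwards [hEv a] with β hba
    obtain ⟨⟨hb, -⟩, ha⟩ := hba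
    have hca : c • a ∈ 𝒜 β := SMulMemClass.smul_mem c ha
    simp only [hs₂def, dif_pos hb, dif_pos ha, dif_pos hca]
    have he : (⟨c • a, hca⟩ : 𝒜 β) = c • (⟨a, ha⟩ : 𝒜 β) := by ext; simp
    rw [he, (hP2 β hb).1.map_smul]
  -- positivity
  have hgpos : ∀ a : A, 0 ≤ g (star a * a) := by
    intro a
    refine complex_isClosed_nonneg.mem_of_tendsto (hg (star a * a)) ?_
    filter_upwards [hEv a] with β hba
    obtain ⟨⟨hb, -⟩, ha⟩ := hba
    have hsa : star a * a ∈ 𝒜 β := mul_mem (star_mem ha) ha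
    show (0 : ℂ) ≤ s₁ β (star a * a)
    simp only [hs₁def, dif_pos hb, dif_pos hsa]
    have he : (⟨star a * a, hsa⟩ : 𝒜 β) = star (⟨a, ha⟩ : 𝒜 β) * ⟨a, ha⟩ := by ext; simp
    rw [he]
    exact (hP1 β hb).2.1 _
  have hhpos : ∀ a : A, 0 ≤ h (star a * a) := by
    intro a
    refine complex_isClosed_nonneg.mem_of_tendsto (hh (star a * a)) ?_
    filter_upwards [hEv a] with β hba
    obtain ⟨⟨hb, -⟩, ha⟩ := hba
    have hsa : star a * a ∈ 𝒜 β := mul_mem (star_mem ha) ha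
    show (0 : ℂ) ≤ s₂ β (star a * a)
    simp only [hs₂def, dif_pos hb, dif_pos hsa]
    have he : (⟨star a * a, hsa⟩ : 𝒜 β) = star (⟨a, ha⟩ : 𝒜 β) * ⟨a, ha⟩ := by ext; simp
    rw [he]
    exact (hP2 β hb).2.1 _
  -- the average identity
  have hsum : ∀ a : A, g a + h a = 2 * f a := by
    intro a
    refine tendsto_nhds_unique ((hg a).add (hh a)) (Filter.Tendsto.congr' ?_ tendsto_const_nhds)
    filter_upwards [hEv a] with β hba
    obtain ⟨⟨hb, -⟩, ha⟩ := hba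
    show (2 : ℂ) * f a = s₁ β a + s₂ β a
    simp only [hs₁def, hs₂def, dif_pos hb, dif_pos ha]
    have h3 := hP3 β hb ⟨a, ha⟩
    have hcoe : ((⟨a, ha⟩ : 𝒜 β) : A) = a := rfl
    rw [hcoe] at h3
    linear_combination (2 : ℂ) * h3
  have havgA : ∀ a : A, f a = (g a + h a) / 2 := by
    intro a
    rw [hsum a]; ring
  have havgA' : ∀ a : A, f a = (h a + g a) / 2 := by
    intro a
    rw [havgA a]; ring
  -- g and h are states
  have hgst : IsState g :=
    ⟨⟨hgadd, hgsmul⟩, hgpos, hgbd, state_norm_cond f g h hf.1 hhbd havgA⟩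
  have hhst : IsState h :=
    ⟨⟨hhadd, hhsmul⟩, hhpos, hhbd, state_norm_cond f h g hf.1 hgbd havgA'⟩
  have hgh : g = h := hf.2 g h hgst hhst havgA
  -- but g and h differ at x
  have hsep' : ε₀ ≤ ‖g x - h x‖ := by
    have hcl : IsClosed {z : ℂ | ε₀ ≤ ‖z‖} := isClosed_le continuous_const continuous_norm
    refine hcl.mem_of_tendsto ((hg x).sub (hh x)) ?_
    filter_upwards [hEv x] with β hba
    obtain ⟨⟨hb, hbd⟩, hxa⟩ := hba
    show ε₀ ≤ ‖s₁ β x - s₂ β x‖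
    simp only [hs₁def, hs₂def, dif_pos hb, dif_pos hxa]
    have hdeq : (P β hb).1 ⟨x, hxa⟩ - (P β hb).2 ⟨x, hxa⟩ = d β := by
      simp only [hddef, dif_pos hb]
    rw [hdeq]
    exact hbd
  rw [hgh, sub_self, norm_zero] at hsep'
  linarith

end
end
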